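/- Let a, c ∈ ℝ, b ∈ ℝ ∪ {−∞}, and let φ : (a,∞) → (b,c) be a strictly decreasing C¹ bijection with φ'(t) < 0 for all t (so φ(t) → c as t → a⁺). Fix u₀ ∈ (a,∞) and let u be the maximal C² solution of the grim-reaper equation u''(x) = φ'(u(x))·(1 + u'(x)²) with u(0) = u₀, u'(0) = 0. Then u is concave, even, attains its maximum at x = 0, its maximal interval of existence is (−Λ, Λ) where Λ = ∫_{a}^{u₀} dλ / √(e^{2(φ(λ) − φ(u₀))} − 1) is finite, and lim_{x→±Λ} u(x) = a and lim_{x→±Λ} |u'(x)| = √(e^{2(c − φ(u₀))} − 1). -/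

import Mathlib

/-! The grim-reaper equation has the first integral `e^{-2φ(u)} (1 + u'²) = const`, so the
solution with `u(0) = u₀`, `u'(0) = 0` satisfies `u'² = e^{2(φ(u) - φ(u₀))} - 1`. Since
`u'' = φ'(u) (1 + u'²) < 0`, the solution decreases for `x > 0`, and separating variables shows
that it reaches height `s` at time `T(s) = ∫_s^{u₀} dλ / √(e^{2(φ(λ) - φ(u₀))} - 1)`. Near `u₀`
the integrand is `O((u₀ - λ)^{-1/2})` because `φ'(u₀) < 0`, and near `a` it is bounded, so
`Λ = T(a)` is finite. The solution is `u(x) = T⁻¹(|x|)` on `(-Λ, Λ)`; conversely every solution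
satisfies `T(v(x)) = |x|`, hence lives in `(-Λ, Λ)`. At `±Λ` we get `u → a`, so `φ(u) → c`, which
gives the limit of `|u'|`. -/

open Set Filter MeasureTheory
open scoped Topology

noncomputable def LamLow (φ : ℝ → ℝ) (a u₀ : ℝ) : ℝ :=
  ∫ t in Set.Ioo a u₀, 1 / Real.sqrt (Real.exp (2 * (φ t - φ u₀)) - 1)

theorem ContinuousOn.continuousOn_invFunOn_image {X Y : Type*} [TopologicalSpace X]
    [TopologicalSpace Y] [T2Space Y] [Nonempty X] {f : X → Y} {K : Set X} (hK : IsCompact K)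
    (hf : ContinuousOn f K) (hinj : InjOn f K) :
    ContinuousOn (Function.invFunOn f K) (f '' K) := by
  -- the preimage of a closed `C` is the compact, hence closed, set `f '' (K ∩ C)`
  refine continuousOn_iff_isClosed.2 fun C hC => ⟨f '' (K ∩ C),
    ((hK.inter_right hC).image_of_continuousOn (hf.mono inter_subset_left)).isClosed, ?_⟩
  ext y
  constructor
  · rintro ⟨hyC, x, hx, rfl⟩
    rw [mem_preimage, hinj.leftInvOn_invFunOn hx] at hyC
    exact ⟨⟨x, ⟨hx, hyC⟩, rfl⟩, x, hx, rfl⟩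
  · rintro ⟨⟨x, ⟨hx, hxC⟩, rfl⟩, -⟩
    refine ⟨?_, x, hx, rfl⟩
    rwa [mem_preimage, hinj.leftInvOn_invFunOn hx]

theorem hasDerivAt_of_hasDerivAt_of_ne_of_mem_nhds {E : Type*} [NormedAddCommGroup E]
    [NormedSpace ℝ E] {f g : ℝ → E} {x : ℝ} {s : Set ℝ} (hs : s ∈ 𝓝 x)
    (hderiv : ∀ y ∈ s, y ≠ x → HasDerivAt f (g y) y) (hf : ContinuousAt f x)
    (hg : ContinuousAt g x) : HasDerivAt f (g x) x := by
  have hright : HasDerivWithinAt f (g x) (Ici x) x := by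
    refine hasDerivWithinAt_Ici_of_tendsto_deriv (s := Ioi x ∩ s)
      (fun y hy => (hderiv y hy.2 hy.1.ne').differentiableAt.differentiableWithinAt)
      hf.continuousWithinAt (inter_mem_nhdsWithin _ hs) ?_
    refine (hg.tendsto.mono_left nhdsWithin_le_nhds).congr' ?_
    filter_upwards [inter_mem_nhdsWithin (Ioi x) hs] with y hy
    exact (hderiv y hy.2 hy.1.ne').deriv.symm
  have hleft : HasDerivWithinAt f (g x) (Iic x) x := by
    refine hasDerivWithinAt_Iic_of_tendsto_deriv (s := Iio x ∩ s)
      (fun y hy => (hderiv y hy.2 hy.1.ne).differentiableAt.differentiableWithinAt)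
      hf.continuousWithinAt (inter_mem_nhdsWithin _ hs) ?_
    refine (hg.tendsto.mono_left nhdsWithin_le_nhds).congr' ?_
    filter_upwards [inter_mem_nhdsWithin (Iio x) hs] with y hy
    exact (hderiv y hy.2 hy.1.ne).deriv.symm
  simpa using hleft.union hright

theorem AntitoneOn.tendsto_nhdsGT_of_isLUB {f : ℝ → ℝ} {a c : ℝ} (hf : AntitoneOn f (Ioi a))
    (hc : IsLUB (f '' Ioi a) c) : Tendsto f (𝓝[>] a) (𝓝 c) := by
  simpa [hc.csSup_eq (nonempty_Ioi.image f)] using hf.tendsto_nhdsGT hc.bddAbove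

theorem AntitoneOn.tendsto_nhdsGT_of_bijOn {f : ℝ → ℝ} {a c : ℝ} {b : EReal}
    (hf : AntitoneOn f (Ioi a)) (hbij : BijOn f (Ioi a) {y : ℝ | b < (y : EReal) ∧ y < c}) :
    Tendsto f (𝓝[>] a) (𝓝 c) := by
  obtain ⟨hb, hc⟩ := hbij.mapsTo (lt_add_one a)
  refine hf.tendsto_nhdsGT_of_isLUB (hbij.image_eq ▸ (isLUB_Ico hc).of_subset_of_superset
    isLUB_Iio (fun y hy => ⟨hb.trans_le (by exact_mod_cast hy.1), hy.2⟩) fun y hy => hy.2)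

theorem eventually_mul_sub_lt_of_hasDerivAt {E : ℝ → ℝ} {E' b : ℝ} (hb : E b = 0)
    (hE : HasDerivAt E E' b) (hE' : E' < 0) : ∀ᶠ t in 𝓝[<] b, -E' / 2 * (b - t) < E t := by
  have hslope : ∀ᶠ t in 𝓝[<] b, slope E b t < E' / 2 :=
    ((hasDerivAt_iff_tendsto_slope.1 hE).mono_left (nhdsWithin_mono _ fun t ht => ne_of_lt ht))
      |>.eventually (gt_mem_nhds (by linarith))
  filter_upwards [hslope, self_mem_nhdsWithin] with t ht htb
  rw [slope_def_field, hb, sub_zero, div_lt_iff_of_neg (sub_neg.2 htb)] at ht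
  linarith

theorem integrableOn_one_div_sqrt_of_mul_sub_lt {E : ℝ → ℝ} {k m b : ℝ} (hk : 0 < k)
    (hm : m < b) (hcont : ContinuousOn E (Ioo m b)) (hE : ∀ t ∈ Ioo m b, k * (b - t) < E t) :
    IntegrableOn (fun t => 1 / √(E t)) (Ioo m b) := by
  have hmaj : IntegrableOn (fun t => (√k)⁻¹ * (b - t) ^ (-(1 / 2 : ℝ))) (Ioo m b) := by
    have h0 : IntervalIntegrable (fun x : ℝ => x ^ (-(1 / 2 : ℝ))) volume 0 (b - m) :=
      intervalIntegral.intervalIntegrable_rpow' (by norm_num)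
    have h := (h0.comp_sub_left b).const_mul (√k)⁻¹
    rw [sub_zero, sub_sub_cancel] at h
    exact (intervalIntegrable_iff_integrableOn_Ioo_of_le hm.le).1 h.symm
  have hpos : ∀ t ∈ Ioo m b, 0 < E t := fun t ht =>
    lt_trans (mul_pos hk (sub_pos.2 ht.2)) (hE t ht)
  refine hmaj.mono' ((continuousOn_const.div (hcont.sqrt) fun t ht =>
    (Real.sqrt_pos.2 (hpos t ht)).ne').aestronglyMeasurable measurableSet_Ioo) ?_
  refine (ae_restrict_iff' measurableSet_Ioo).2 (Eventually.of_forall fun t ht => ?_)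
  have hbt : 0 < b - t := sub_pos.2 ht.2
  rw [Real.norm_eq_abs, abs_of_nonneg (by positivity), Real.rpow_neg hbt.le,
    ← Real.sqrt_eq_rpow, ← mul_inv, ← Real.sqrt_mul hk.le, one_div]
  exact inv_anti₀ (by positivity) (Real.sqrt_le_sqrt (hE t ht).le)

theorem integrableOn_one_div_sqrt_of_hasDerivAt_neg {E : ℝ → ℝ} {E' a b : ℝ} (hab : a < b)
    (hcont : ContinuousOn E (Ioo a b)) (hanti : AntitoneOn E (Ioo a b))
    (hpos : ∀ t ∈ Ioo a b, 0 < E t) (hb : E b = 0) (hE : HasDerivAt E E' b) (hE' : E' < 0) :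
    IntegrableOn (fun t => 1 / √(E t)) (Ioo a b) := by
  obtain ⟨m, hmb, hm⟩ := mem_nhdsLT_iff_exists_Ioo_subset.1
    (eventually_mul_sub_lt_of_hasDerivAt hb hE hE')
  set m' := max m ((a + b) / 2)
  have hm' : m' ∈ Ioo a b := ⟨lt_max_of_lt_right (by linarith), max_lt hmb (by linarith)⟩
  have hnear : IntegrableOn (fun t => 1 / √(E t)) (Ioo m' b) :=
    integrableOn_one_div_sqrt_of_mul_sub_lt (by linarith) hm'.2
      (hcont.mono (Ioo_subset_Ioo_left hm'.1.le))
      fun t ht => hm ⟨(le_max_left _ _).trans_lt ht.1, ht.2⟩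
  have hfar : IntegrableOn (fun t => 1 / √(E t)) (Ioc a m') := by
    refine (integrableOn_const (C := 1 / √(E m')) measure_Ioc_lt_top.ne).mono'
      (((continuousOn_const.div hcont.sqrt fun t ht => (Real.sqrt_pos.2 (hpos t ht)).ne').mono
        (Ioc_subset_Ioo_right hm'.2)).aestronglyMeasurable measurableSet_Ioc) ?_
    refine (ae_restrict_iff' measurableSet_Ioc).2 (Eventually.of_forall fun t ht => ?_)
    have ht' : t ∈ Ioo a b := ⟨ht.1, ht.2.trans_lt hm'.2⟩
    rw [Real.norm_eq_abs, abs_of_nonneg (by positivity)]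
    exact one_div_le_one_div_of_le (Real.sqrt_pos.2 (hpos m' hm'))
      (Real.sqrt_le_sqrt (hanti ht' hm' ht.2))
  rw [← Ioc_union_Ioo_eq_Ioo hm'.1.le hm'.2]
  exact hfar.union hnear

namespace GrimReaper

/-- By the first integral `e^{-2φ(v)} (1 + v'²) = e^{-2φ(u₀)}`, a solution with `v 0 = u₀` and
`v' 0 = 0` has `v' ^ 2 = slopeSq φ u₀ v`. -/
noncomputable def slopeSq (φ : ℝ → ℝ) (u₀ t : ℝ) : ℝ := Real.exp (2 * (φ t - φ u₀)) - 1

/-- The time the solution through its maximum `(0, u₀)` needs to descend to height `s`. -/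
noncomputable def descentTime (φ : ℝ → ℝ) (u₀ s : ℝ) : ℝ := ∫ t in s..u₀, 1 / √(slopeSq φ u₀ t)

noncomputable def height (φ : ℝ → ℝ) (a u₀ : ℝ) : ℝ → ℝ :=
  Function.invFunOn (descentTime φ u₀) (Icc a u₀)

noncomputable def profile (φ : ℝ → ℝ) (a u₀ x : ℝ) : ℝ := height φ a u₀ |x|

noncomputable def profileDeriv (φ : ℝ → ℝ) (a u₀ x : ℝ) : ℝ :=
  -Real.sign x * √(slopeSq φ u₀ (profile φ a u₀ x))

def SolvesAt (φ' v v' : ℝ → ℝ) (x : ℝ) : Prop :=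
  HasDerivAt v (v' x) x ∧ HasDerivAt v' (φ' (v x) * (1 + v' x ^ 2)) x

variable {φ φ' : ℝ → ℝ} {a u₀ : ℝ}

@[simp]
theorem slopeSq_self : slopeSq φ u₀ u₀ = 0 := by simp [slopeSq]

theorem slopeSq_pos_iff {t : ℝ} : 0 < slopeSq φ u₀ t ↔ φ u₀ < φ t := by simp [slopeSq]

theorem slopeSq_pos (hanti : StrictAntiOn φ (Ioi a)) {t : ℝ} (ht : t ∈ Ioo a u₀) :
    0 < slopeSq φ u₀ t :=
  slopeSq_pos_iff.2 (hanti ht.1 (ht.1.trans ht.2) ht.2)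

theorem continuousAt_slopeSq {t : ℝ} (hφ : ContinuousAt φ t) :
    ContinuousAt (slopeSq φ u₀) t := by
  unfold slopeSq
  fun_prop

theorem hasDerivAt_slopeSq {t d : ℝ} (hφ : HasDerivAt φ d t) :
    HasDerivAt (slopeSq φ u₀) (2 * d * (1 + slopeSq φ u₀ t)) t := by
  refine (((hφ.sub_const (φ u₀)).const_mul 2).exp.sub_const 1).congr_deriv ?_
  simp only [slopeSq]
  ring

theorem hasDerivAt_neg_sqrt_slopeSq_comp {w : ℝ → ℝ} {x d : ℝ}
    (hw : HasDerivAt w (-√(slopeSq φ u₀ (w x))) x) (hφ : HasDerivAt φ d (w x))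
    (hpos : 0 < slopeSq φ u₀ (w x)) :
    HasDerivAt (fun y => -√(slopeSq φ u₀ (w y)))
      (d * (1 + (-√(slopeSq φ u₀ (w x))) ^ 2)) x := by
  refine (((Real.hasDerivAt_sqrt hpos.ne').comp x
    ((hasDerivAt_slopeSq hφ).comp x hw)).neg).congr_deriv ?_
  have hsqrt := (Real.sqrt_pos.2 hpos).ne'
  field_simp
  rw [Real.sq_sqrt hpos.le]

theorem antitoneOn_slopeSq {s : Set ℝ} (hanti : AntitoneOn φ s) :
    AntitoneOn (slopeSq φ u₀) s := fun _ hx _ hy hxy =>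
  sub_le_sub_right (Real.exp_le_exp.2 (by linarith [hanti hx hy hxy])) 1

theorem continuousOn_one_div_sqrt_slopeSq (hanti : StrictAntiOn φ (Ioi a))
    (hφ : ContinuousOn φ (Ioi a)) :
    ContinuousOn (fun t => 1 / √(slopeSq φ u₀ t)) (Ioo a u₀) := fun _ ht =>
  (continuousAt_const.div (continuousAt_slopeSq (hφ.continuousAt (Ioi_mem_nhds ht.1))).sqrt
    (Real.sqrt_pos.2 (slopeSq_pos hanti ht)).ne').continuousWithinAt

theorem integrableOn_one_div_sqrt_slopeSq (hanti : StrictAntiOn φ (Ioi a))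
    (hφ : ∀ t ∈ Ioi a, HasDerivAt φ (φ' t) t) (hφ'u₀ : φ' u₀ < 0) (hu₀ : a < u₀) :
    IntegrableOn (fun t => 1 / √(slopeSq φ u₀ t)) (Ioo a u₀) := by
  refine integrableOn_one_div_sqrt_of_hasDerivAt_neg hu₀
    (fun t ht => (continuousAt_slopeSq (hφ t ht.1).continuousAt).continuousWithinAt)
    ((antitoneOn_slopeSq hanti.antitoneOn).mono Ioo_subset_Ioi_self)
    (fun t ht => slopeSq_pos hanti ht) slopeSq_self (hasDerivAt_slopeSq (hφ u₀ hu₀)) ?_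
  rw [slopeSq_self, add_zero, mul_one]
  linarith

@[simp]
theorem descentTime_self : descentTime φ u₀ u₀ = 0 := intervalIntegral.integral_same

theorem descentTime_eq_lamLow (hu₀ : a ≤ u₀) : descentTime φ u₀ a = LamLow φ a u₀ := by
  rw [descentTime, intervalIntegral.integral_of_le hu₀, integral_Ioc_eq_integral_Ioo]
  rfl

theorem continuousOn_descentTime
    (hint : IntegrableOn (fun t => 1 / √(slopeSq φ u₀ t)) (Ioo a u₀)) (hu₀ : a ≤ u₀) :
    ContinuousOn (descentTime φ u₀) (Icc a u₀) := by
  have h := intervalIntegral.continuousOn_primitive_interval_left (μ := volume)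
    (hint.congr_set_ae Ioo_ae_eq_Icc.symm |>.mono_set (uIcc_of_le hu₀).subset)
  rwa [uIcc_of_le hu₀] at h

theorem hasDerivAt_descentTime (hanti : StrictAntiOn φ (Ioi a)) (hφ : ContinuousOn φ (Ioi a))
    (hint : IntegrableOn (fun t => 1 / √(slopeSq φ u₀ t)) (Ioo a u₀)) {s : ℝ}
    (hs : s ∈ Ioo a u₀) : HasDerivAt (descentTime φ u₀) (-(1 / √(slopeSq φ u₀ s))) s := by
  have hcont := continuousOn_one_div_sqrt_slopeSq (u₀ := u₀) hanti hφ
  refine intervalIntegral.integral_hasDerivAt_left ?_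
    (hcont.stronglyMeasurableAtFilter isOpen_Ioo s hs)
    (hcont.continuousAt (Ioo_mem_nhds hs.1 hs.2))
  exact (intervalIntegrable_iff_integrableOn_Ioo_of_le hs.2.le).2
    (hint.mono_set (Ioo_subset_Ioo_left hs.1.le))

theorem strictAntiOn_descentTime (hanti : StrictAntiOn φ (Ioi a)) (hφ : ContinuousOn φ (Ioi a))
    (hint : IntegrableOn (fun t => 1 / √(slopeSq φ u₀ t)) (Ioo a u₀)) (hu₀ : a ≤ u₀) :
    StrictAntiOn (descentTime φ u₀) (Icc a u₀) := by
  refine strictAntiOn_of_deriv_neg (convex_Icc a u₀) (continuousOn_descentTime hint hu₀) ?_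
  intro s hs
  rw [interior_Icc] at hs
  rw [(hasDerivAt_descentTime hanti hφ hint hs).deriv, neg_lt_zero]
  exact one_div_pos.2 (Real.sqrt_pos.2 (slopeSq_pos hanti hs))

theorem lamLow_pos (hanti : StrictAntiOn φ (Ioi a)) (hφ : ContinuousOn φ (Ioi a))
    (hint : IntegrableOn (fun t => 1 / √(slopeSq φ u₀ t)) (Ioo a u₀)) (hu₀ : a < u₀) :
    0 < LamLow φ a u₀ := by
  simpa [descentTime_eq_lamLow hu₀.le] using strictAntiOn_descentTime hanti hφ hint hu₀.le
    (left_mem_Icc.2 hu₀.le) (right_mem_Icc.2 hu₀.le) hu₀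

theorem bijOn_descentTime (hanti : StrictAntiOn φ (Ioi a)) (hφ : ContinuousOn φ (Ioi a))
    (hint : IntegrableOn (fun t => 1 / √(slopeSq φ u₀ t)) (Ioo a u₀)) (hu₀ : a ≤ u₀) :
    BijOn (descentTime φ u₀) (Icc a u₀) (Icc 0 (LamLow φ a u₀)) := by
  have hmono := strictAntiOn_descentTime hanti hφ hint hu₀
  rw [← descentTime_eq_lamLow hu₀, ← descentTime_self (φ := φ) (u₀ := u₀)]
  refine ⟨fun s hs => ?_, hmono.injOn,
    intermediate_value_Icc' hu₀ (continuousOn_descentTime hint hu₀)⟩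
  exact ⟨hmono.antitoneOn hs (right_mem_Icc.2 hu₀) hs.2,
    hmono.antitoneOn (left_mem_Icc.2 hu₀) hs hs.1⟩

section height

variable {y : ℝ}

theorem height_descentTime (hbij : BijOn (descentTime φ u₀) (Icc a u₀) (Icc 0 (LamLow φ a u₀)))
    {s : ℝ} (hs : s ∈ Icc a u₀) : height φ a u₀ (descentTime φ u₀ s) = s :=
  hbij.injOn.leftInvOn_invFunOn hs

theorem height_zero (hbij : BijOn (descentTime φ u₀) (Icc a u₀) (Icc 0 (LamLow φ a u₀)))
    (hu₀ : a ≤ u₀) : height φ a u₀ 0 = u₀ := by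
  simpa using height_descentTime hbij (right_mem_Icc.2 hu₀)

theorem height_lamLow (hbij : BijOn (descentTime φ u₀) (Icc a u₀) (Icc 0 (LamLow φ a u₀)))
    (hu₀ : a ≤ u₀) : height φ a u₀ (LamLow φ a u₀) = a := by
  simpa [descentTime_eq_lamLow hu₀] using height_descentTime hbij (left_mem_Icc.2 hu₀)

theorem height_mem_Ioc (hbij : BijOn (descentTime φ u₀) (Icc a u₀) (Icc 0 (LamLow φ a u₀)))
    (hu₀ : a ≤ u₀) (hy : y ∈ Ico 0 (LamLow φ a u₀)) : height φ a u₀ y ∈ Ioc a u₀ := by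
  have hmem : height φ a u₀ y ∈ Icc a u₀ := hbij.surjOn.mapsTo_invFunOn (Ico_subset_Icc_self hy)
  refine ⟨hmem.1.lt_of_ne fun ha => hy.2.ne ?_, hmem.2⟩
  calc y = descentTime φ u₀ (height φ a u₀ y) :=
        (hbij.surjOn.rightInvOn_invFunOn (Ico_subset_Icc_self hy)).symm
    _ = LamLow φ a u₀ := by rw [← ha, descentTime_eq_lamLow hu₀]

theorem height_mem_Ioo (hbij : BijOn (descentTime φ u₀) (Icc a u₀) (Icc 0 (LamLow φ a u₀)))
    (hu₀ : a ≤ u₀) (hy : y ∈ Ioo 0 (LamLow φ a u₀)) : height φ a u₀ y ∈ Ioo a u₀ := by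
  have hmem := height_mem_Ioc hbij hu₀ (Ioo_subset_Ico_self hy)
  refine ⟨hmem.1, hmem.2.lt_of_ne fun hu => hy.1.ne' ?_⟩
  calc y = descentTime φ u₀ (height φ a u₀ y) :=
        (hbij.surjOn.rightInvOn_invFunOn (Ioo_subset_Icc_self hy)).symm
    _ = 0 := by rw [hu, descentTime_self]

theorem continuousOn_height (hbij : BijOn (descentTime φ u₀) (Icc a u₀) (Icc 0 (LamLow φ a u₀)))
    (hcont : ContinuousOn (descentTime φ u₀) (Icc a u₀)) :
    ContinuousOn (height φ a u₀) (Icc 0 (LamLow φ a u₀)) :=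
  hbij.image_eq ▸ hcont.continuousOn_invFunOn_image isCompact_Icc hbij.injOn

theorem hasDerivAt_height (hanti : StrictAntiOn φ (Ioi a)) (hφ : ContinuousOn φ (Ioi a))
    (hint : IntegrableOn (fun t => 1 / √(slopeSq φ u₀ t)) (Ioo a u₀)) (hu₀ : a ≤ u₀)
    (hy : y ∈ Ioo 0 (LamLow φ a u₀)) :
    HasDerivAt (height φ a u₀) (-√(slopeSq φ u₀ (height φ a u₀ y))) y := by
  have hbij := bijOn_descentTime hanti hφ hint hu₀
  have hmem := height_mem_Ioo hbij hu₀ hy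
  have hinv := (hasDerivAt_descentTime hanti hφ hint hmem).of_local_left_inverse
    ((continuousOn_height hbij (continuousOn_descentTime hint hu₀)).continuousAt
      (Icc_mem_nhds hy.1 hy.2))
    (neg_ne_zero.2 (one_div_pos.2 (Real.sqrt_pos.2 (slopeSq_pos hanti hmem))).ne')
    (by filter_upwards [Ioo_mem_nhds hy.1 hy.2] with z hz
        exact hbij.surjOn.rightInvOn_invFunOn (Ioo_subset_Icc_self hz))
  rwa [one_div, neg_inv, inv_inv] at hinv

end height

section solutions

variable {I : Set ℝ} {v v' : ℝ → ℝ} {x : ℝ}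

theorem SolvesAt.comp_neg (h : SolvesAt φ' v v' (-x)) :
    SolvesAt φ' (fun y => v (-y)) (fun y => -v' (-y)) x := by
  constructor
  · have h1 := h.1.comp x (hasDerivAt_neg x)
    rwa [mul_neg_one] at h1
  · refine ((h.2.comp x (hasDerivAt_neg x)).neg).congr_deriv ?_
    ring

theorem strictAntiOn_of_solvesAt (hI : IsOpen I) (hIc : Convex ℝ I)
    (hφ'neg : ∀ t ∈ Ioi a, φ' t < 0) (hv : ∀ x ∈ I, v x ∈ Ioi a)
    (hsol : ∀ x ∈ I, SolvesAt φ' v v' x) : StrictAntiOn v' I := by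
  refine strictAntiOn_of_deriv_neg hIc
    (fun y hy => (hsol y hy).2.continuousAt.continuousWithinAt) fun y hy => ?_
  rw [hI.interior_eq] at hy
  rw [(hsol y hy).2.deriv]
  exact mul_neg_of_neg_of_pos (hφ'neg _ (hv y hy)) (by positivity)

theorem concaveOn_of_solvesAt (hI : IsOpen I) (hIc : Convex ℝ I)
    (hφ'neg : ∀ t ∈ Ioi a, φ' t < 0) (hv : ∀ x ∈ I, v x ∈ Ioi a)
    (hsol : ∀ x ∈ I, SolvesAt φ' v v' x) : ConcaveOn ℝ I v := by
  refine concaveOn_of_hasDerivWithinAt2_nonpos (f' := v')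
    (f'' := fun x => φ' (v x) * (1 + v' x ^ 2)) hIc
    (fun x hx => (hsol x hx).1.continuousAt.continuousWithinAt) ?_ ?_ ?_ <;>
    rw [hI.interior_eq]
  · exact fun x hx => (hsol x hx).1.hasDerivWithinAt
  · exact fun x hx => (hsol x hx).2.hasDerivWithinAt
  · exact fun x hx => mul_nonpos_of_nonpos_of_nonneg (hφ'neg _ (hv x hx)).le (by positivity)

theorem sq_deriv_eq_slopeSq (hφ : ∀ t ∈ Ioi a, HasDerivAt φ (φ' t) t) (hI : IsOpen I)
    (hIc : IsPreconnected I) (h0 : 0 ∈ I) (hv : ∀ x ∈ I, v x ∈ Ioi a) (hv0 : v 0 = u₀)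
    (hv'0 : v' 0 = 0) (hsol : ∀ x ∈ I, SolvesAt φ' v v' x) (hx : x ∈ I) :
    v' x ^ 2 = slopeSq φ u₀ (v x) := by
  set W : ℝ → ℝ := fun y => Real.exp (-(2 * φ (v y))) * (1 + v' y ^ 2)
  have hW : ∀ y ∈ I, HasDerivAt W 0 y := fun y hy => by
    have h1 : HasDerivAt (fun y => Real.exp (-(2 * φ (v y))))
        (Real.exp (-(2 * φ (v y))) * -(2 * (φ' (v y) * v' y))) y :=
      (((hφ _ (hv y hy)).comp y (hsol y hy).1).const_mul 2).neg.exp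
    have h2 : HasDerivAt (fun y => 1 + v' y ^ 2)
        (2 * v' y * (φ' (v y) * (1 + v' y ^ 2))) y := by
      simpa using ((hsol y hy).2.pow 2).const_add 1
    exact (h1.mul h2).congr_deriv (by ring)
  have hconst : W x = W 0 := hI.is_const_of_deriv_eq_zero hIc
    (fun y hy => (hW y hy).differentiableAt.differentiableWithinAt)
    (fun y hy => (hW y hy).deriv) hx h0
  have hexp : 1 + v' x ^ 2 = Real.exp (2 * (φ (v x) - φ u₀)) := by
    rw [show 2 * (φ (v x) - φ u₀) = -(2 * φ u₀) - -(2 * φ (v x)) by ring, Real.exp_sub]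
    rw [eq_div_iff (Real.exp_pos _).ne']
    simpa [W, hv0, hv'0, mul_comm] using hconst
  rw [slopeSq, ← hexp]
  ring

theorem eq_neg_sqrt_slopeSq_and_mem_Ioo_of_solvesAt (hanti : StrictAntiOn φ (Ioi a))
    (hφ : ∀ t ∈ Ioi a, HasDerivAt φ (φ' t) t) (hφ'neg : ∀ t ∈ Ioi a, φ' t < 0)
    (hI : IsOpen I) (hIc : Convex ℝ I) (h0 : 0 ∈ I) (hv : ∀ x ∈ I, v x ∈ Ioi a)
    (hv0 : v 0 = u₀) (hv'0 : v' 0 = 0) (hsol : ∀ x ∈ I, SolvesAt φ' v v' x) (hx : x ∈ I)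
    (hxpos : 0 < x) : v' x = -√(slopeSq φ u₀ (v x)) ∧ v x ∈ Ioo a u₀ := by
  have hneg : v' x < 0 := hv'0 ▸ strictAntiOn_of_solvesAt hI hIc hφ'neg hv hsol h0 hx hxpos
  have hsq := sq_deriv_eq_slopeSq hφ hI hIc.isPreconnected h0 hv hv0 hv'0 hsol hx
  refine ⟨?_, hv x hx, ?_⟩
  · rw [← hsq, Real.sqrt_sq_eq_abs, abs_of_neg hneg, neg_neg]
  · have hpos : 0 < slopeSq φ u₀ (v x) := hsq ▸ sq_pos_of_neg hneg
    rw [← hv0] at hpos ⊢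
    exact (hanti.lt_iff_gt (hv 0 h0) (hv x hx)).1 (slopeSq_pos_iff.1 hpos)

theorem descentTime_eq_of_solvesAt (hanti : StrictAntiOn φ (Ioi a))
    (hφ : ∀ t ∈ Ioi a, HasDerivAt φ (φ' t) t) (hφ'neg : ∀ t ∈ Ioi a, φ' t < 0)
    (hint : IntegrableOn (fun t => 1 / √(slopeSq φ u₀ t)) (Ioo a u₀)) (hu₀ : a ≤ u₀)
    (hI : IsOpen I) (hIc : Convex ℝ I) (h0 : 0 ∈ I) (hv : ∀ x ∈ I, v x ∈ Ioi a)
    (hv0 : v 0 = u₀) (hv'0 : v' 0 = 0) (hsol : ∀ x ∈ I, SolvesAt φ' v v' x) (hx : x ∈ I)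
    (hxpos : 0 < x) : descentTime φ u₀ (v x) = x := by
  have hφc : ContinuousOn φ (Ioi a) := fun t ht => (hφ t ht).continuousAt.continuousWithinAt
  have hsub : Icc 0 x ⊆ I := hIc.ordConnected.out h0 hx
  have hdesc : ∀ y ∈ Ioc 0 x, v' y = -√(slopeSq φ u₀ (v y)) ∧ v y ∈ Ioo a u₀ := fun y hy =>
    eq_neg_sqrt_slopeSq_and_mem_Ioo_of_solvesAt hanti hφ hφ'neg hI hIc h0 hv hv0 hv'0 hsol
      (hsub (Ioc_subset_Icc_self hy)) hy.1
  have hmaps : MapsTo v (Icc 0 x) (Icc a u₀) := fun y hy => by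
    rcases hy.1.eq_or_lt with rfl | hy0
    · rw [hv0]
      exact right_mem_Icc.2 hu₀
    · exact Ioo_subset_Icc_self (hdesc y ⟨hy0, hy.2⟩).2
  obtain ⟨c, -, hc⟩ := exists_hasDerivAt_eq_slope (fun y => descentTime φ u₀ (v y) - y)
    (fun _ => 0) hxpos (((continuousOn_descentTime hint hu₀).comp
      (fun y hy => (hsol y (hsub hy)).1.continuousAt.continuousWithinAt) hmaps).sub
      continuousOn_id) fun y hy => by
    obtain ⟨hv'y, hvy⟩ := hdesc y ⟨hy.1, hy.2.le⟩
    refine (((hasDerivAt_descentTime hanti hφc hint hvy).comp y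
      (hsol y (hsub (Ioo_subset_Icc_self hy))).1).sub (hasDerivAt_id y)).congr_deriv ?_
    rw [hv'y]
    field_simp [(Real.sqrt_pos.2 (slopeSq_pos hanti hvy)).ne']
    ring
  rw [sub_zero, eq_comm, div_eq_zero_iff, hv0, descentTime_self] at hc
  rcases hc with hc | hc <;> linarith

theorem lt_lamLow_of_solvesAt (hanti : StrictAntiOn φ (Ioi a))
    (hφ : ∀ t ∈ Ioi a, HasDerivAt φ (φ' t) t) (hφ'neg : ∀ t ∈ Ioi a, φ' t < 0)
    (hint : IntegrableOn (fun t => 1 / √(slopeSq φ u₀ t)) (Ioo a u₀)) (hu₀ : a < u₀)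
    (hI : IsOpen I) (hIc : Convex ℝ I) (h0 : 0 ∈ I) (hv : ∀ x ∈ I, v x ∈ Ioi a)
    (hv0 : v 0 = u₀) (hv'0 : v' 0 = 0) (hsol : ∀ x ∈ I, SolvesAt φ' v v' x) (hx : x ∈ I) :
    x < LamLow φ a u₀ := by
  have hφc : ContinuousOn φ (Ioi a) := fun t ht => (hφ t ht).continuousAt.continuousWithinAt
  rcases le_or_gt x 0 with hx0 | hxpos
  · exact hx0.trans_lt (lamLow_pos hanti hφc hint hu₀)
  have hvx := (eq_neg_sqrt_slopeSq_and_mem_Ioo_of_solvesAt hanti hφ hφ'neg hI hIc h0 hv hv0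
    hv'0 hsol hx hxpos).2
  rw [← descentTime_eq_of_solvesAt hanti hφ hφ'neg hint hu₀.le hI hIc h0 hv hv0 hv'0 hsol hx
    hxpos, ← descentTime_eq_lamLow hu₀.le]
  exact strictAntiOn_descentTime hanti hφc hint hu₀.le (left_mem_Icc.2 hu₀.le)
    (Ioo_subset_Icc_self hvx) hvx.1

theorem subset_Ioo_lamLow_of_solvesAt (hanti : StrictAntiOn φ (Ioi a))
    (hφ : ∀ t ∈ Ioi a, HasDerivAt φ (φ' t) t) (hφ'neg : ∀ t ∈ Ioi a, φ' t < 0)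
    (hint : IntegrableOn (fun t => 1 / √(slopeSq φ u₀ t)) (Ioo a u₀)) (hu₀ : a < u₀)
    (hI : IsOpen I) (hIc : Convex ℝ I) (h0 : 0 ∈ I) (hv : ∀ x ∈ I, v x ∈ Ioi a)
    (hv0 : v 0 = u₀) (hv'0 : v' 0 = 0) (hsol : ∀ x ∈ I, SolvesAt φ' v v' x) :
    I ⊆ Ioo (-LamLow φ a u₀) (LamLow φ a u₀) :=
  fun x hx => ⟨neg_lt.1 <| lt_lamLow_of_solvesAt hanti hφ hφ'neg hint hu₀
      (v := fun y => v (-y)) (v' := fun y => -v' (-y)) hI.neg hIc.neg (by simpa using h0)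
      (fun y hy => hv _ hy) (by simpa using hv0) (by simpa using hv'0)
      (fun y hy => (hsol _ hy).comp_neg) (by simpa using hx),
    lt_lamLow_of_solvesAt hanti hφ hφ'neg hint hu₀ hI hIc h0 hv hv0 hv'0 hsol hx⟩

end solutions

section profile

variable {x : ℝ}

theorem profile_neg (x : ℝ) : profile φ a u₀ (-x) = profile φ a u₀ x := by
  simp [profile]

theorem profileDeriv_neg (x : ℝ) : profileDeriv φ a u₀ (-x) = -profileDeriv φ a u₀ x := by
  simp only [profileDeriv, profile_neg, Real.sign_neg]
  ring

@[simp]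
theorem profileDeriv_zero : profileDeriv φ a u₀ 0 = 0 := by
  simp [profileDeriv, Real.sign_zero]

theorem abs_profileDeriv_le (x : ℝ) :
    |profileDeriv φ a u₀ x| ≤ √(slopeSq φ u₀ (profile φ a u₀ x)) := by
  rw [profileDeriv, abs_mul, abs_of_nonneg (Real.sqrt_nonneg _)]
  refine mul_le_of_le_one_left (Real.sqrt_nonneg _) ?_
  rcases Real.sign_apply_eq x with h | h | h <;> simp [h]

theorem abs_profileDeriv (hx : x ≠ 0) :
    |profileDeriv φ a u₀ x| = √(slopeSq φ u₀ (profile φ a u₀ x)) := by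
  rw [profileDeriv, abs_mul, abs_of_nonneg (Real.sqrt_nonneg _)]
  rcases Real.sign_apply_eq_of_ne_zero x hx with h | h <;> simp [h]

theorem profile_zero (hbij : BijOn (descentTime φ u₀) (Icc a u₀) (Icc 0 (LamLow φ a u₀)))
    (hu₀ : a ≤ u₀) : profile φ a u₀ 0 = u₀ := by
  simpa [profile] using height_zero hbij hu₀

theorem profile_mem_Ioc (hbij : BijOn (descentTime φ u₀) (Icc a u₀) (Icc 0 (LamLow φ a u₀)))
    (hu₀ : a ≤ u₀) (hx : x ∈ Ioo (-LamLow φ a u₀) (LamLow φ a u₀)) :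
    profile φ a u₀ x ∈ Ioc a u₀ :=
  height_mem_Ioc hbij hu₀ ⟨abs_nonneg x, abs_lt.2 hx⟩

theorem continuousOn_profile (hbij : BijOn (descentTime φ u₀) (Icc a u₀) (Icc 0 (LamLow φ a u₀)))
    (hcont : ContinuousOn (descentTime φ u₀) (Icc a u₀)) :
    ContinuousOn (profile φ a u₀) (Icc (-LamLow φ a u₀) (LamLow φ a u₀)) :=
  (continuousOn_height hbij hcont).comp continuous_abs.continuousOn
    fun x hx => ⟨abs_nonneg x, abs_le.2 hx⟩

theorem continuousAt_profileDeriv_zero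
    (hbij : BijOn (descentTime φ u₀) (Icc a u₀) (Icc 0 (LamLow φ a u₀)))
    (hφ : ContinuousAt φ u₀) (hu₀ : a ≤ u₀) (hu : ContinuousAt (profile φ a u₀) 0) :
    ContinuousAt (profileDeriv φ a u₀) 0 := by
  have hS : ContinuousAt (fun y => √(slopeSq φ u₀ (profile φ a u₀ y))) 0 :=
    ((continuousAt_slopeSq ((profile_zero hbij hu₀).symm ▸ hφ)).comp hu).sqrt
  rw [ContinuousAt, profileDeriv_zero]
  refine squeeze_zero_norm abs_profileDeriv_le ?_
  simpa [profile_zero hbij hu₀] using hS.tendsto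

theorem solvesAt_profile_of_pos (hanti : StrictAntiOn φ (Ioi a))
    (hφ : ∀ t ∈ Ioi a, HasDerivAt φ (φ' t) t)
    (hint : IntegrableOn (fun t => 1 / √(slopeSq φ u₀ t)) (Ioo a u₀)) (hu₀ : a ≤ u₀)
    (hx : x ∈ Ioo 0 (LamLow φ a u₀)) :
    SolvesAt φ' (profile φ a u₀) (profileDeriv φ a u₀) x := by
  have hφc : ContinuousOn φ (Ioi a) := fun t ht => (hφ t ht).continuousAt.continuousWithinAt
  have hmem := height_mem_Ioo (bijOn_descentTime hanti hφc hint hu₀) hu₀ hx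
  have hH := hasDerivAt_height hanti hφc hint hu₀ hx
  have heq : profile φ a u₀ =ᶠ[𝓝 x] height φ a u₀ := by
    filter_upwards [Ioi_mem_nhds hx.1] with y hy
    simp [profile, abs_of_pos (mem_Ioi.1 hy)]
  have heq' : profileDeriv φ a u₀ =ᶠ[𝓝 x] fun y => -√(slopeSq φ u₀ (height φ a u₀ y)) := by
    filter_upwards [Ioi_mem_nhds hx.1] with y hy
    simp [profileDeriv, profile, Real.sign_of_pos (mem_Ioi.1 hy), abs_of_pos (mem_Ioi.1 hy)]
  rw [SolvesAt, heq.eq_of_nhds, heq'.eq_of_nhds]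
  exact ⟨hH.congr_of_eventuallyEq heq, (hasDerivAt_neg_sqrt_slopeSq_comp hH (hφ _ hmem.1)
    (slopeSq_pos hanti hmem)).congr_of_eventuallyEq heq'⟩

theorem solvesAt_profile_of_ne_zero (hanti : StrictAntiOn φ (Ioi a))
    (hφ : ∀ t ∈ Ioi a, HasDerivAt φ (φ' t) t)
    (hint : IntegrableOn (fun t => 1 / √(slopeSq φ u₀ t)) (Ioo a u₀)) (hu₀ : a ≤ u₀)
    (hx : x ∈ Ioo (-LamLow φ a u₀) (LamLow φ a u₀)) (hx0 : x ≠ 0) :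
    SolvesAt φ' (profile φ a u₀) (profileDeriv φ a u₀) x := by
  rcases hx0.lt_or_gt with hneg | hpos
  · have h := (solvesAt_profile_of_pos hanti hφ hint hu₀
      (x := -x) ⟨neg_pos.2 hneg, neg_lt.1 hx.1⟩).comp_neg
    simpa only [neg_neg, profile_neg, profileDeriv_neg] using h
  · exact solvesAt_profile_of_pos hanti hφ hint hu₀ ⟨hpos, hx.2⟩

theorem solvesAt_profile (hanti : StrictAntiOn φ (Ioi a))
    (hφ : ∀ t ∈ Ioi a, HasDerivAt φ (φ' t) t) (hφ'c : ContinuousOn φ' (Ioi a))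
    (hint : IntegrableOn (fun t => 1 / √(slopeSq φ u₀ t)) (Ioo a u₀)) (hu₀ : a < u₀)
    (hx : x ∈ Ioo (-LamLow φ a u₀) (LamLow φ a u₀)) :
    SolvesAt φ' (profile φ a u₀) (profileDeriv φ a u₀) x := by
  rcases eq_or_ne x 0 with rfl | hx0
  -- `descentTime` has infinite slope at `u₀ = profile 0`, so the two halves are glued by continuity
  · have hφc : ContinuousOn φ (Ioi a) := fun t ht => (hφ t ht).continuousAt.continuousWithinAt
    have hbij := bijOn_descentTime hanti hφc hint hu₀.le
    have hne := fun y hy (hy0 : y ≠ 0) =>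
      solvesAt_profile_of_ne_zero (φ' := φ') hanti hφ hint hu₀.le hy hy0
    have hu : ContinuousAt (profile φ a u₀) 0 := (continuousOn_profile hbij
      (continuousOn_descentTime hint hu₀.le)).continuousAt (Icc_mem_nhds hx.1 hx.2)
    have hu' := continuousAt_profileDeriv_zero hbij (hφ u₀ hu₀).continuousAt hu₀.le hu
    have hφ' : ContinuousAt φ' (profile φ a u₀ 0) := by
      rw [profile_zero hbij hu₀.le]
      exact hφ'c.continuousAt (Ioi_mem_nhds hu₀)
    exact ⟨hasDerivAt_of_hasDerivAt_of_ne_of_mem_nhds (Ioo_mem_nhds hx.1 hx.2)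
        (fun y hy hy0 => (hne y hy hy0).1) hu hu',
      hasDerivAt_of_hasDerivAt_of_ne_of_mem_nhds (Ioo_mem_nhds hx.1 hx.2)
        (fun y hy hy0 => (hne y hy hy0).2) hu'
        ((hφ'.comp hu).mul (continuousAt_const.add (hu'.pow 2)))⟩
  · exact solvesAt_profile_of_ne_zero hanti hφ hint hu₀.le hx hx0

theorem tendsto_profile_nhdsLT_lamLow
    (hbij : BijOn (descentTime φ u₀) (Icc a u₀) (Icc 0 (LamLow φ a u₀)))
    (hcont : ContinuousOn (descentTime φ u₀) (Icc a u₀)) (hu₀ : a ≤ u₀)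
    (hΛ : 0 < LamLow φ a u₀) :
    Tendsto (profile φ a u₀) (𝓝[<] LamLow φ a u₀) (𝓝[>] a) := by
  have hIoo : Ioo (-LamLow φ a u₀) (LamLow φ a u₀) ∈ 𝓝[<] LamLow φ a u₀ :=
    Ioo_mem_nhdsLT (by linarith)
  have hend : profile φ a u₀ (LamLow φ a u₀) = a := by
    rw [profile, abs_of_pos hΛ, height_lamLow hbij hu₀]
  refine tendsto_nhdsWithin_iff.2 ⟨?_, ?_⟩
  · have h := (continuousOn_profile hbij hcont _ ⟨by linarith, le_rfl⟩).tendsto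
    rw [hend] at h
    exact h.mono_left (nhdsWithin_le_of_mem (mem_of_superset hIoo Ioo_subset_Icc_self))
  · filter_upwards [hIoo] with x hx using (profile_mem_Ioc hbij hu₀ hx).1

theorem tendsto_abs_profileDeriv {l : Filter ℝ} {c : ℝ} (hφ : Tendsto φ (𝓝[>] a) (𝓝 c))
    (hl : ∀ᶠ x in l, x ≠ 0) (hu : Tendsto (profile φ a u₀) l (𝓝[>] a)) :
    Tendsto (fun x => |profileDeriv φ a u₀ x|) l (𝓝 √(Real.exp (2 * (c - φ u₀)) - 1)) := by
  refine ((((hφ.sub_const _).const_mul 2).rexp.sub_const 1).sqrt.comp hu).congr' ?_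
  filter_upwards [hl] with x hx using (abs_profileDeriv hx).symm

end profile

end GrimReaper

open GrimReaper

/-- Let `φ : (a,∞) → (b,c)` (`a, c ∈ ℝ`, `b ∈ ℝ ∪ {-∞}`) be a strictly
decreasing C¹ bijection with negative derivative.  Then the maximal solution of the
grim-reaper equation with `u(0) = u₀`, `u'(0) = 0` is concave, even, has a maximum at
`0`, its maximal interval of existence is `(-Λ, Λ)` with
`Λ = ∫_a^{u₀} dλ/√(e^{2(φ(λ)-φ(u₀))}-1)` finite, and `u(x) → a`,
`|u'(x)| → √(e^{2(c-φ(u₀))}-1)` as `x → ±Λ`. -/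
theorem stmt_6 (a c : ℝ) (b : EReal) (φ φ' : ℝ → ℝ)
    (hbij : Set.BijOn φ (Ioi a) {y : ℝ | b < (y : EReal) ∧ y < c})
    (hanti : StrictAntiOn φ (Ioi a))
    (hφ : ∀ t ∈ Ioi a, HasDerivAt φ (φ' t) t)
    (hφ'c : ContinuousOn φ' (Ioi a))
    (hφ'neg : ∀ t ∈ Ioi a, φ' t < 0)
    (u₀ : ℝ) (hu₀ : a < u₀) :
    -- `Λ` is finite ...
    IntegrableOn (fun t => 1 / Real.sqrt (Real.exp (2 * (φ t - φ u₀)) - 1))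
      (Ioo a u₀) ∧
    0 < LamLow φ a u₀ ∧
    -- ... and the maximal solution is defined exactly on `(-Λ, Λ)`
    ∃ u u' : ℝ → ℝ,
      (∀ x ∈ Ioo (-(LamLow φ a u₀)) (LamLow φ a u₀), u x ∈ Ioi a) ∧
      u 0 = u₀ ∧ u' 0 = 0 ∧
      (∀ x ∈ Ioo (-(LamLow φ a u₀)) (LamLow φ a u₀), HasDerivAt u (u' x) x) ∧
      (∀ x ∈ Ioo (-(LamLow φ a u₀)) (LamLow φ a u₀),
        HasDerivAt u' (φ' (u x) * (1 + u' x ^ 2)) x) ∧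
      -- concave, even, maximum at the origin
      ConcaveOn ℝ (Ioo (-(LamLow φ a u₀)) (LamLow φ a u₀)) u ∧
      (∀ x ∈ Ioo (-(LamLow φ a u₀)) (LamLow φ a u₀), u (-x) = u x) ∧
      (∀ x ∈ Ioo (-(LamLow φ a u₀)) (LamLow φ a u₀), u x ≤ u 0) ∧
      -- maximality of the interval of existence
      (∀ (I' : Set ℝ) (v v' : ℝ → ℝ), IsOpen I' → Convex ℝ I' → (0 : ℝ) ∈ I' →
        (∀ x ∈ I', v x ∈ Ioi a) → v 0 = u₀ → v' 0 = 0 →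
        (∀ x ∈ I', HasDerivAt v (v' x) x) →
        (∀ x ∈ I', HasDerivAt v' (φ' (v x) * (1 + v' x ^ 2)) x) →
        I' ⊆ Ioo (-(LamLow φ a u₀)) (LamLow φ a u₀)) ∧
      -- behaviour at the ends of the maximal interval
      Tendsto u (𝓝[<] (LamLow φ a u₀)) (𝓝 a) ∧
      Tendsto u (𝓝[>] (-(LamLow φ a u₀))) (𝓝 a) ∧
      Tendsto (fun x => |u' x|) (𝓝[<] (LamLow φ a u₀))
        (𝓝 (Real.sqrt (Real.exp (2 * (c - φ u₀)) - 1))) ∧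
      Tendsto (fun x => |u' x|) (𝓝[>] (-(LamLow φ a u₀)))
        (𝓝 (Real.sqrt (Real.exp (2 * (c - φ u₀)) - 1))) := by
  have hφc : ContinuousOn φ (Ioi a) := fun t ht => (hφ t ht).continuousAt.continuousWithinAt
  have hint := integrableOn_one_div_sqrt_slopeSq hanti hφ (hφ'neg u₀ hu₀) hu₀
  have hΛ := lamLow_pos hanti hφc hint hu₀
  have htime := bijOn_descentTime hanti hφc hint hu₀.le
  have hsol := fun x (hx : x ∈ Ioo (-LamLow φ a u₀) (LamLow φ a u₀)) =>
    solvesAt_profile hanti hφ hφ'c hint hu₀ hx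
  have hmem := fun x (hx : x ∈ Ioo (-LamLow φ a u₀) (LamLow φ a u₀)) =>
    profile_mem_Ioc htime hu₀.le hx
  have hlimφ := hanti.antitoneOn.tendsto_nhdsGT_of_bijOn hbij
  have hright := tendsto_profile_nhdsLT_lamLow htime (continuousOn_descentTime hint hu₀.le)
    hu₀.le hΛ
  have hleft : Tendsto (profile φ a u₀) (𝓝[>] (-LamLow φ a u₀)) (𝓝[>] a) := by
    simpa [Function.comp_def, profile_neg] using hright.comp tendsto_neg_nhdsGT_neg
  refine ⟨hint, hΛ, profile φ a u₀, profileDeriv φ a u₀, fun x hx => (hmem x hx).1,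
    profile_zero htime hu₀.le, profileDeriv_zero, fun x hx => (hsol x hx).1,
    fun x hx => (hsol x hx).2, concaveOn_of_solvesAt isOpen_Ioo (convex_Ioo _ _) hφ'neg
      (fun x hx => (hmem x hx).1) hsol, fun x _ => profile_neg x,
    fun x hx => (profile_zero htime hu₀.le).symm ▸ (hmem x hx).2,
    fun I v v' hI hIc h0 hv hv0 hv'0 hdv hdv' => subset_Ioo_lamLow_of_solvesAt hanti hφ hφ'neg
      hint hu₀ hI hIc h0 hv hv0 hv'0 fun x hx => ⟨hdv x hx, hdv' x hx⟩,
    tendsto_nhds_of_tendsto_nhdsWithin hright, tendsto_nhds_of_tendsto_nhdsWithin hleft,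
    tendsto_abs_profileDeriv hlimφ (mem_of_superset (Ioo_mem_nhdsLT hΛ) fun x hx => hx.1.ne')
      hright,
    tendsto_abs_profileDeriv hlimφ
      (mem_of_superset (Ioo_mem_nhdsGT (neg_lt_zero.2 hΛ)) fun x hx => hx.2.ne) hleft⟩
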